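/- arXiv:0804.1081 — 4 statements merged into one kernel-verified Lean document; each statement's English description precedes it below -/
import Mathlib

section
/- The function h ↦ Γ(h) - 1/h tends to -γ as h tends to 0 along nonzero complex numbers, where Γ is the complex Gamma function and γ is the Euler–Mascheroni constant. Equivalently, lim_{h→0, h≠0} (Γ(h) - 1/h) = -γ. -/
open Filter Topology

theorem tendsto_Gamma_sub_inv_nhdsWithin_zero :
    Tendsto (fun h : ℂ => Complex.Gamma h - 1 / h) (𝓝[≠] (0 : ℂ))
      (𝓝 (-(Real.eulerMascheroniConstant : ℂ))) := by
  refine (hasDerivAt_iff_tendsto_slope_zero.mp Complex.hasDerivAt_Gamma_one).congr' ?_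
  filter_upwards [self_mem_nhdsWithin] with h (hh : h ≠ 0)
  rw [add_comm, Complex.Gamma_add_one h hh, Complex.Gamma_one, smul_eq_mul]
  field_simp
end

section
/- For complex numbers z and h with Re(z) > 0 and Re(h) > 0, the Beta function satisfies the series expansion B(z, h+1) = ∑_{n=0}^{∞} (-h)_n / (n! · (z+n)), where (-h)_n is the Pochhammer symbol; equivalently, B(z,h+1) = ∑_{n=0}^{∞} (-1)^n h(h-1)···(h-n+1) / (n! · (z+n)). In particular, this series converges. -/
/-!
Expand `(1 - x) ^ h` by the binomial series, whose coefficients are `(-h)ₙ / n!`, and integrate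
term by term against `x ^ (z - 1)` over `[0, 1]`; the `n`-th term contributes
`(-h)ₙ / (n! (z + n))`. Termwise integration is legitimate because `∑ |(-h)ₙ| / n! < ∞` for
`0 < re h`: consecutive coefficients have ratio `|n - h| / (n + 1)`, which is eventually at most
`1 - (1 + re h / 2) / (n + 1)`, so Raabe's test applies.
-/

open Complex MeasureTheory Set Filter Interval

theorem ascPochhammer_eval_neg_div_factorial {K : Type*} [Field K] [CharZero K] (h : K) (n : ℕ) :
    (ascPochhammer K n).eval (-h) / n.factorial = (-1) ^ n * Ring.choose h n := by
  rw [ascPochhammer_eval_neg_eq_descPochhammer, ← descPochhammer_map (algebraMap ℤ K),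
    Polynomial.eval_map_algebraMap, Polynomial.aeval_eq_smeval,
    Ring.descPochhammer_eq_factorial_smul_choose, nsmul_eq_mul, mul_div_assoc,
    mul_div_cancel_left₀ _ (Nat.cast_ne_zero.2 n.factorial_ne_zero)]

theorem ascPochhammer_eval_neg_div_factorial_succ {K : Type*} [Field K] [CharZero K] (h : K)
    (n : ℕ) :
    (ascPochhammer K (n + 1)).eval (-h) / (n + 1).factorial =
      (n - h) / (n + 1) * ((ascPochhammer K n).eval (-h) / n.factorial) := by
  rw [ascPochhammer_succ_eval, Nat.factorial_succ, Nat.cast_mul, neg_add_eq_sub]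
  push_cast
  field_simp

theorem one_sub_div_le_div_rpow {x s : ℝ} (hx : 0 ≤ x) (hs : 1 ≤ s) :
    1 - s / (x + 1) ≤ (x / (x + 1)) ^ s := by
  have hu : -1 ≤ -(x + 1)⁻¹ := neg_le_neg (inv_le_one_of_one_le₀ (by linarith))
  calc 1 - s / (x + 1) = 1 + s * -(x + 1)⁻¹ := by ring
    _ ≤ (1 + -(x + 1)⁻¹) ^ s := one_add_mul_self_le_rpow_one_add hu hs
    _ = (x / (x + 1)) ^ s := by field_simp; ring_nf

theorem mul_add_one_rpow_le_of_le_one_sub_div_mul {x s c c' : ℝ} (hx : 0 ≤ x) (hs : 1 ≤ s)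
    (hc : 0 ≤ c) (hc' : c' ≤ (1 - s / (x + 1)) * c) :
    c' * (x + 1) ^ s ≤ c * x ^ s := by
  have hx1 : 0 < x + 1 := by linarith
  calc c' * (x + 1) ^ s ≤ (1 - s / (x + 1)) * c * (x + 1) ^ s := by gcongr
    _ ≤ (x / (x + 1)) ^ s * c * (x + 1) ^ s := by gcongr; exact one_sub_div_le_div_rpow hx hs
    _ = c * x ^ s := by
      rw [Real.div_rpow hx hx1.le]
      field_simp [(Real.rpow_pos_of_pos hx1 s).ne']

theorem summable_of_eventually_le_one_sub_div_mul {c : ℕ → ℝ} {s : ℝ} (hs : 1 < s)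
    (hc : ∀ n, 0 ≤ c n) (hratio : ∀ᶠ n : ℕ in atTop, c (n + 1) ≤ (1 - s / (n + 1)) * c n) :
    Summable c := by
  obtain ⟨N, hN⟩ := eventually_atTop.1 hratio
  set d : ℕ → ℝ := fun n => c n * (n : ℝ) ^ s
  have hd : Antitone fun m => d (N + m) := antitone_nat_of_succ_le fun m => by
    simpa [d, add_assoc] using mul_add_one_rpow_le_of_le_one_sub_div_mul (Nat.cast_nonneg _)
      hs.le (hc _) (hN (N + m) (by omega))
  refine Summable.of_norm_bounded_eventually_nat
    ((Real.summable_nat_rpow.2 (neg_lt_neg hs)).mul_left (d N)) ?_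
  filter_upwards [eventually_ge_atTop (max N 1)] with n hn
  have hn0 : (0 : ℝ) < n := by exact_mod_cast (le_max_right N 1).trans hn
  have hdn : d n ≤ d N := by
    simpa [Nat.add_sub_cancel' ((le_max_left N 1).trans hn)] using hd (Nat.zero_le (n - N))
  calc ‖c n‖ = d n * (n : ℝ) ^ (-s) := by
        rw [Real.norm_of_nonneg (hc n), Real.rpow_neg hn0.le,
          mul_inv_cancel_right₀ (Real.rpow_pos_of_pos hn0 s).ne']
    _ ≤ d N * (n : ℝ) ^ (-s) := by gcongr

namespace Complex

theorem hasSum_ascPochhammer_eval_neg_div_factorial_mul_pow (h : ℂ) {y : ℂ} (hy : ‖y‖ < 1) :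
    HasSum (fun n : ℕ => (ascPochhammer ℂ n).eval (-h) / n.factorial * y ^ n) ((1 - y) ^ h) := by
  have hmem : -y ∈ Metric.eball (0 : ℂ) 1 := by simpa [← ofReal_norm] using hy
  have hcoeff (n : ℕ) :
      Ring.choose h n * (-y) ^ n = (ascPochhammer ℂ n).eval (-h) / n.factorial * y ^ n := by
    rw [ascPochhammer_eval_neg_div_factorial, neg_pow]
    ring
  have := one_add_cpow_hasFPowerSeriesOnBall_zero (a := h) |>.hasSum hmem
  simpa only [binomialSeries_apply, List.ofFn_const, List.prod_replicate, smul_eq_mul, zero_add,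
    hcoeff, sub_eq_add_neg] using this

theorem eventually_norm_natCast_sub_le {h : ℂ} (hh : 0 < h.re) :
    ∀ᶠ n : ℕ in atTop, ‖(n : ℂ) - h‖ ≤ n - h.re / 2 := by
  filter_upwards [tendsto_natCast_atTop_atTop.eventually_ge_atTop h.re,
    tendsto_natCast_atTop_atTop.eventually_ge_atTop ((h.im ^ 2 + h.re ^ 2) / h.re)]
    with n hn hn'
  rw [div_le_iff₀ hh] at hn'
  have hsq : ‖(n : ℂ) - h‖ ^ 2 = (n - h.re) ^ 2 + h.im ^ 2 := by
    rw [Complex.sq_norm, normSq_apply]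
    simp only [sub_re, sub_im, natCast_re, natCast_im]
    ring
  refine (pow_le_pow_iff_left₀ (norm_nonneg _) (by linarith) two_ne_zero).1 ?_
  rw [hsq]
  nlinarith

theorem summable_norm_ascPochhammer_eval_neg_div_factorial {h : ℂ} (hh : 0 < h.re) :
    Summable fun n : ℕ => ‖(ascPochhammer ℂ n).eval (-h) / n.factorial‖ := by
  refine summable_of_eventually_le_one_sub_div_mul (s := 1 + h.re / 2) (by linarith)
    (fun n => norm_nonneg _) ?_
  filter_upwards [eventually_norm_natCast_sub_le hh] with n hn
  rw [ascPochhammer_eval_neg_div_factorial_succ, norm_mul, norm_div, ← Nat.cast_add_one,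
    norm_natCast, Nat.cast_add_one]
  gcongr
  calc ‖(n : ℂ) - h‖ / (n + 1) ≤ (n - h.re / 2) / (n + 1) := by gcongr
    _ = 1 - (1 + h.re / 2) / (n + 1) := by field_simp; ring

theorem integral_ofReal_cpow_sub_one {w : ℂ} (hw : 0 < w.re) :
    ∫ x in (0 : ℝ)..1, (x : ℂ) ^ (w - 1) = w⁻¹ := by
  rw [integral_cpow (Or.inl (by simpa using hw)), sub_add_cancel, ofReal_one, one_cpow,
    ofReal_zero, zero_cpow (by rintro rfl; simp at hw), sub_zero, one_div]

theorem integral_ofReal_cpow_sub_one_mul_pow {z : ℂ} (hz : 0 < z.re) (n : ℕ) :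
    ∫ x in (0 : ℝ)..1, (x : ℂ) ^ (z - 1) * (x : ℂ) ^ n = (z + n)⁻¹ := by
  have hcongr : ∀ᵐ x : ℝ, x ∈ Ι 0 1 → (x : ℂ) ^ (z - 1) * (x : ℂ) ^ n = (x : ℂ) ^ (z + n - 1) := by
    refine .of_forall fun x hx => ?_
    have hx0 : (x : ℂ) ≠ 0 := ofReal_ne_zero.2 (uIoc_of_le (zero_le_one (α := ℝ)) ▸ hx).1.ne'
    rw [add_sub_right_comm, cpow_add _ _ hx0, cpow_natCast]
  rw [intervalIntegral.integral_congr_ae hcongr, integral_ofReal_cpow_sub_one]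
  simpa using add_pos_of_pos_of_nonneg hz n.cast_nonneg

theorem hasSum_integral_cpow_mul_tsum {a : ℕ → ℂ} (ha : Summable fun n => ‖a n‖) {z : ℂ}
    (hz : 0 < z.re) :
    HasSum (fun n => a n / (z + n))
      (∫ x in (0 : ℝ)..1, (x : ℂ) ^ (z - 1) * ∑' n, a n * (x : ℂ) ^ n) := by
  set F : ℕ → ℝ → ℂ := fun n x => (x : ℂ) ^ (z - 1) * (a n * (x : ℂ) ^ n)
  have hpow : IntegrableOn (fun x : ℝ => (x : ℂ) ^ (z - 1)) (Ioc 0 1) := by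
    rw [← intervalIntegrable_iff_integrableOn_Ioc_of_le zero_le_one]
    exact intervalIntegral.intervalIntegrable_cpow' (by simpa using hz)
  have hbound (n : ℕ) : ∀ x ∈ Ioc (0 : ℝ) 1, ‖F n x‖ ≤ ‖a n‖ * ‖(x : ℂ) ^ (z - 1)‖ := by
    rintro x ⟨hx0, hx1⟩
    rw [norm_mul, norm_mul, norm_pow, norm_real, Real.norm_of_nonneg hx0.le, mul_left_comm]
    gcongr
    exact mul_le_of_le_one_right (norm_nonneg _) (pow_le_one₀ hx0.le hx1)
  have hF (n : ℕ) : IntegrableOn (F n) (Ioc 0 1) := by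
    refine (hpow.norm.const_mul ‖a n‖).mono' ?_ ((ae_restrict_iff' measurableSet_Ioc).2
      (.of_forall (hbound n)))
    fun_prop
  have hFint (n : ℕ) : ∫ x in Ioc (0 : ℝ) 1, F n x = a n / (z + n) := by
    simp only [F, mul_left_comm _ (a n)]
    rw [integral_const_mul, ← intervalIntegral.integral_of_le zero_le_one,
      integral_ofReal_cpow_sub_one_mul_pow hz, div_eq_mul_inv]
  have hnorm : Summable fun n => ∫ x in Ioc (0 : ℝ) 1, ‖F n x‖ := by
    refine .of_nonneg_of_le (fun n => integral_nonneg fun _ => norm_nonneg _) (fun n => ?_)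
      (ha.mul_right (∫ x in Ioc (0 : ℝ) 1, ‖(x : ℂ) ^ (z - 1)‖))
    rw [← integral_const_mul]
    exact setIntegral_mono_on (hF n).norm (hpow.norm.const_mul _) measurableSet_Ioc (hbound n)
  have := hasSum_integral_of_summable_integral_norm hF hnorm
  simp only [hFint, F, tsum_mul_left] at this
  rwa [intervalIntegral.integral_of_le zero_le_one]

end Complex

theorem betaIntegral_succ_hasSum_pochhammer (z h : ℂ) (hz : 0 < z.re) (hh : 0 < h.re) :
    HasSum (fun n : ℕ =>
        Polynomial.eval (-h) (ascPochhammer ℂ n) / ((n.factorial : ℂ) * (z + n)))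
      (Complex.betaIntegral z (h + 1)) := by
  have hsum :=
    hasSum_integral_cpow_mul_tsum (summable_norm_ascPochhammer_eval_neg_div_factorial hh) hz
  simp only [div_div] at hsum
  convert hsum using 1
  rw [betaIntegral, add_sub_cancel_right]
  refine intervalIntegral.integral_congr_ae ?_
  filter_upwards [Measure.ae_ne volume 1] with x hx1 hx01
  rw [uIoc_of_le zero_le_one] at hx01
  have hx : ‖(x : ℂ)‖ < 1 := by
    rw [norm_real, Real.norm_of_nonneg hx01.1.le]
    exact lt_of_le_of_ne hx01.2 hx1
  rw [(hasSum_ascPochhammer_eval_neg_div_factorial_mul_pow h hx).tsum_eq]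
end

section
/- The function h ↦ Γ(h) - 1/h, defined for positive real h, tends to -γ as h tends to 0 from the right, where Γ is the real Gamma function and γ is the Euler–Mascheroni constant. -/
open Filter Topology

theorem Real.Gamma_sub_inv_eq_slope {h : ℝ} (hh : h ≠ 0) :
    Real.Gamma h - 1 / h = h⁻¹ • (Real.Gamma (1 + h) - Real.Gamma 1) := by
  rw [add_comm, Real.Gamma_add_one hh, Real.Gamma_one, smul_eq_mul]
  field_simp

theorem Real.tendsto_Gamma_sub_inv_nhdsNE_zero :
    Tendsto (fun h : ℝ => Real.Gamma h - 1 / h) (𝓝[≠] 0) (𝓝 (-Real.eulerMascheroniConstant)) :=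
  Real.hasDerivAt_Gamma_one.tendsto_slope_zero.congr' <|
    eventually_nhdsWithin_of_forall fun _ hh => (Real.Gamma_sub_inv_eq_slope hh).symm

theorem tendsto_real_Gamma_sub_inv_nhdsWithin_zero :
    Tendsto (fun h : ℝ => Real.Gamma h - 1 / h) (𝓝[>] (0 : ℝ))
      (𝓝 (-Real.eulerMascheroniConstant)) :=
  Real.tendsto_Gamma_sub_inv_nhdsNE_zero.mono_left (nhdsGT_le_nhdsNE 0)
end

section
/- For every real number x > 0, the logarithmic derivative of the real Gamma function satisfies Γ'(x)/Γ(x) = -γ - ∑_{n=1}^{∞} (1-x)_n / (n · n!), where (1-x)_n is the Pochhammer symbol and γ is the Euler–Mascheroni constant. In particular, the series on the right-hand side converges. -/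
/-!
Write `ψ = (log ∘ Γ)'`. For `0 < x ≤ 1` the numbers `(1-x)_n` are nonnegative and the double
series `∑_{n,k} (1-x)_{n+1} k! / (n+k+2)!` can be summed both ways by telescoping: over `k` it
gives `(1-x)_{n+1} / ((n+1) (n+1)!)`, over `n` it gives `1/(x+k) - 1/(k+1)`. The latter series sums
to `-γ - ψ(x)`, because `ψ(x+n) = ψ(x) + ∑_{k<n} 1/(x+k)` while log-convexity of `Γ` traps
`ψ(x+n)` between `ψ(n) = -γ + H_{n-1}` and `ψ(n+1) = -γ + H_n`.

Both sides then drop by `1/x` under `x ↦ x + 1`: on the right since `ψ(x+1) = ψ(x) + 1/x`, on the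
left since `(-x)_{n+1} = (1-x)_{n+1} - (n+1) (1-x)_n` and, by telescoping, Waring's series
`∑_n (1-x)_n / ((n+1) n!)` equals `1/x`; the telescoping needs `(1-x)_n / n! → 0`, which holds
because eventually `|(1-x)_{n+1}/(n+1)!| = |(1-x)_n/n!| (1 - x/(n+1))` and `∑ x/(n+1) = ∞`.
-/

open Real Filter Topology Finset Polynomial
open scoped Nat

theorem hasSum_sub_succ_of_antitone {u : ℕ → ℝ} {l : ℝ} (hu : Antitone u)
    (hl : Tendsto u atTop (𝓝 l)) : HasSum (fun n => u n - u (n + 1)) (u 0 - l) := by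
  rw [hasSum_iff_tendsto_nat_of_nonneg (fun n => sub_nonneg.2 (hu n.le_succ))]
  simpa only [Finset.sum_range_sub'] using tendsto_const_nhds.sub hl

theorem HasSum.of_rows_of_nonneg {α β : Type*} {F : α → β → ℝ} {r : α → ℝ} {c : β → ℝ} {s : ℝ}
    (hF : ∀ i j, 0 ≤ F i j) (hrow : ∀ i, HasSum (F i) (r i))
    (hcol : ∀ j, HasSum (fun i => F i j) (c j)) (hr : HasSum r s) : HasSum c s := by
  have hsum : Summable (Function.uncurry F) :=
    (summable_prod_of_nonneg fun p => hF p.1 p.2).2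
      ⟨fun i => (hrow i).summable, hr.summable.congr fun i => ((hrow i).tsum_eq).symm⟩
  have htot : ∑' p, Function.uncurry F p = s := (hsum.hasSum.prod_fiberwise hrow).unique hr
  rw [← htot]
  exact ((Equiv.prodComm β α).hasSum_iff.2 hsum.hasSum).prod_fiberwise hcol

section Contraction

variable {u a : ℕ → ℝ}

theorem antitone_of_le_mul_one_sub (hu : ∀ n, 0 ≤ u n) (ha : ∀ n, 0 ≤ a n)
    (hstep : ∀ n, u (n + 1) ≤ u n * (1 - a n)) : Antitone u :=
  antitone_nat_of_succ_le fun n => by nlinarith [hstep n, mul_nonneg (hu n) (ha n)]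

theorem summable_mul_of_le_mul_one_sub (hu : ∀ n, 0 ≤ u n) (ha : ∀ n, 0 ≤ a n)
    (hstep : ∀ n, u (n + 1) ≤ u n * (1 - a n)) : Summable fun n => u n * a n := by
  have hanti := antitone_of_le_mul_one_sub hu ha hstep
  have hlim := tendsto_atTop_ciInf hanti ⟨0, by rintro _ ⟨n, rfl⟩; exact hu n⟩
  exact (hasSum_sub_succ_of_antitone hanti hlim).summable.of_nonneg_of_le
    (fun n => mul_nonneg (hu n) (ha n)) fun n => by linarith [hstep n]

theorem tendsto_zero_of_le_mul_one_sub (hu : ∀ n, 0 ≤ u n) (ha : ∀ n, 0 ≤ a n)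
    (hstep : ∀ n, u (n + 1) ≤ u n * (1 - a n)) (hdiv : ¬Summable a) :
    Tendsto u atTop (𝓝 0) := by
  have hbdd : BddBelow (Set.range u) := ⟨0, by rintro _ ⟨n, rfl⟩; exact hu n⟩
  have hlim := tendsto_atTop_ciInf (antitone_of_le_mul_one_sub hu ha hstep) hbdd
  rcases (le_ciInf hu : 0 ≤ ⨅ n, u n).eq_or_lt with h0 | hpos
  · rwa [← h0] at hlim
  refine absurd ((summable_mul_left_iff hpos.ne').1 ?_) hdiv
  exact (summable_mul_of_le_mul_one_sub hu ha hstep).of_nonneg_of_le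
    (fun n => mul_nonneg hpos.le (ha n))
    fun n => mul_le_mul_of_nonneg_right (ciInf_le hbdd n) (ha n)

end Contraction

theorem not_summable_div_nat_add_one {c : ℝ} (hc : c ≠ 0) (N : ℕ) :
    ¬Summable fun n : ℕ => c / ((n + N : ℕ) + 1 : ℝ) := by
  intro h
  refine Real.not_summable_one_div_natCast ((summable_nat_add_iff (N + 1)).1
    ((summable_mul_left_iff hc).1 (h.congr fun n => ?_)))
  push_cast
  field_simp
  ring

theorem factorial_mul_factorial_le_factorial_add (m k : ℕ) : (m ! * k ! : ℝ) ≤ (m + k)! := by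
  exact_mod_cast Nat.le_of_dvd (Nat.factorial_pos _)
    (Nat.factorial_mul_factorial_dvd_factorial_add m k)

theorem hasSum_factorial_mul_factorial_div_factorial (m : ℕ) :
    HasSum (fun k : ℕ => ((m + 1)! * k ! : ℝ) / (m + k + 2)!) (1 / (m + 1)) := by
  set u : ℕ → ℝ := fun k => (m ! * k ! : ℝ) / (m + k + 1)! with hu
  have hdiff : ∀ k, u k - u (k + 1) = ((m + 1)! * k ! : ℝ) / (m + k + 2)! := by
    intro k
    simp only [hu, show m + (k + 1) + 1 = m + k + 1 + 1 by ring,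
      show m + k + 2 = m + k + 1 + 1 by ring]
    rw [Nat.factorial_succ (m + k + 1), Nat.factorial_succ k, Nat.factorial_succ m]
    push_cast
    field_simp
    ring
  have hanti : Antitone u := antitone_nat_of_succ_le fun k => by
    have := hdiff k
    have : (0 : ℝ) ≤ ((m + 1)! * k ! : ℝ) / (m + k + 2)! := by positivity
    linarith
  have hlim : Tendsto u atTop (𝓝 0) := by
    refine squeeze_zero (fun k => by positivity) (fun k => ?_)
      tendsto_one_div_add_atTop_nhds_zero_nat
    have h := factorial_mul_factorial_le_factorial_add m (k + 1)
    rw [Nat.factorial_succ, ← add_assoc] at h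
    push_cast at h
    rw [hu, div_le_div_iff₀ (by positivity) (by positivity)]
    linarith
  have h0 : u 0 = 1 / (m + 1) := by
    simp only [hu, Nat.factorial_zero, add_zero, Nat.factorial_succ]
    push_cast
    field_simp
  simpa only [hdiff, h0, sub_zero] using hasSum_sub_succ_of_antitone hanti hlim

noncomputable def ascPochhammerDivFactorial (a : ℝ) (n : ℕ) : ℝ :=
  (ascPochhammer ℝ n).eval a / n !

theorem ascPochhammerDivFactorial_zero (a : ℝ) : ascPochhammerDivFactorial a 0 = 1 := by
  simp [ascPochhammerDivFactorial]

theorem ascPochhammerDivFactorial_succ (a : ℝ) (n : ℕ) :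
    ascPochhammerDivFactorial a (n + 1) = ascPochhammerDivFactorial a n * ((a + n) / (n + 1)) := by
  rw [ascPochhammerDivFactorial, ascPochhammerDivFactorial, ascPochhammer_succ_eval,
    Nat.factorial_succ]
  push_cast
  field_simp

theorem ascPochhammerDivFactorial_sub_succ (a : ℝ) (n : ℕ) :
    ascPochhammerDivFactorial a n - ascPochhammerDivFactorial a (n + 1) =
      ascPochhammerDivFactorial a n * ((1 - a) / (n + 1)) := by
  rw [ascPochhammerDivFactorial_succ]
  field_simp
  ring

theorem ascPochhammerDivFactorial_sub_one_succ (a : ℝ) (n : ℕ) :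
    ascPochhammerDivFactorial (a - 1) (n + 1) =
      ascPochhammerDivFactorial a (n + 1) - ascPochhammerDivFactorial a n := by
  have h : (ascPochhammer ℝ (n + 1)).eval (a - 1) = (a - 1) * (ascPochhammer ℝ n).eval a := by
    rw [ascPochhammer_succ_left, eval_mul, eval_X, eval_comp, eval_add, eval_X, eval_one,
      sub_add_cancel]
  simp only [ascPochhammerDivFactorial, h, ascPochhammer_succ_eval, Nat.factorial_succ]
  push_cast
  field_simp
  ring

theorem ascPochhammerDivFactorial_nonneg {a : ℝ} (ha : 0 ≤ a) (n : ℕ) :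
    0 ≤ ascPochhammerDivFactorial a n := by
  induction n with
  | zero => simp [ascPochhammerDivFactorial_zero]
  | succ n ih =>
    rw [ascPochhammerDivFactorial_succ]
    exact mul_nonneg ih (div_nonneg (by positivity) (by positivity))

theorem abs_ascPochhammerDivFactorial_succ {a : ℝ} {n : ℕ} (h : 0 ≤ a + n) :
    |ascPochhammerDivFactorial a (n + 1)| =
      |ascPochhammerDivFactorial a n| * (1 - (1 - a) / (n + 1)) := by
  rw [ascPochhammerDivFactorial_succ, abs_mul, abs_of_nonneg (div_nonneg h (by positivity))]
  field_simp
  ring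

theorem abs_ascPochhammerDivFactorial_add_succ {a : ℝ} {N : ℕ} (hN : 0 ≤ a + N) (n : ℕ) :
    |ascPochhammerDivFactorial a (n + 1 + N)| =
      |ascPochhammerDivFactorial a (n + N)| * (1 - (1 - a) / ((n + N : ℕ) + 1)) := by
  rw [add_right_comm,
    abs_ascPochhammerDivFactorial_succ (by push_cast; linarith [n.cast_nonneg (α := ℝ)])]

theorem summable_abs_ascPochhammerDivFactorial_sub_succ {a : ℝ} (ha : a < 1) :
    Summable fun n : ℕ =>
      |ascPochhammerDivFactorial a n - ascPochhammerDivFactorial a (n + 1)| := by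
  obtain ⟨N, hN⟩ := exists_nat_ge (-a)
  have hsum := summable_mul_of_le_mul_one_sub
    (u := fun n => |ascPochhammerDivFactorial a (n + N)|)
    (fun n => abs_nonneg _) (fun n => div_nonneg (by linarith) (by positivity))
    fun n => (abs_ascPochhammerDivFactorial_add_succ (by linarith : 0 ≤ a + N) n).le
  rw [← summable_nat_add_iff N]
  refine hsum.congr fun n => ?_
  rw [ascPochhammerDivFactorial_sub_succ, abs_mul,
    abs_of_nonneg (a := (1 - a) / _) (div_nonneg (by linarith) (by positivity))]

theorem tendsto_ascPochhammerDivFactorial {a : ℝ} (ha : a < 1) :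
    Tendsto (ascPochhammerDivFactorial a) atTop (𝓝 0) := by
  obtain ⟨N, hN⟩ := exists_nat_ge (-a)
  rw [tendsto_zero_iff_abs_tendsto_zero, ← tendsto_add_atTop_iff_nat N]
  refine tendsto_zero_of_le_mul_one_sub (fun n => abs_nonneg _)
    (fun n => div_nonneg (by linarith) (by positivity))
    (fun n => (abs_ascPochhammerDivFactorial_add_succ (by linarith : 0 ≤ a + N) n).le) ?_
  exact not_summable_div_nat_add_one (by linarith) N

theorem hasSum_ascPochhammerDivFactorial_div_succ {a : ℝ} (ha : a < 1) :
    HasSum (fun n : ℕ => ascPochhammerDivFactorial a n / (n + 1)) (1 - a)⁻¹ := by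
  have hterm : ∀ n : ℕ, ascPochhammerDivFactorial a n / (n + 1) =
      (ascPochhammerDivFactorial a n - ascPochhammerDivFactorial a (n + 1)) * (1 - a)⁻¹ := by
    intro n
    rw [ascPochhammerDivFactorial_sub_succ]
    field_simp [show 1 - a ≠ 0 by linarith]
  have hsum : Summable fun n : ℕ =>
      (ascPochhammerDivFactorial a n - ascPochhammerDivFactorial a (n + 1)) * (1 - a)⁻¹ :=
    (summable_abs_ascPochhammerDivFactorial_sub_succ ha).of_abs.mul_right _
  rw [funext hterm, hsum.hasSum_iff_tendsto_nat]
  simp only [← Finset.sum_mul, Finset.sum_range_sub', ascPochhammerDivFactorial_zero]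
  simpa using ((tendsto_const_nhds (x := (1 : ℝ))).sub
    (tendsto_ascPochhammerDivFactorial ha)).mul_const (1 - a)⁻¹

theorem hasSum_ascPochhammerDivFactorial_mul_factorial_div_factorial {a : ℝ} (ha0 : 0 ≤ a)
    (ha1 : a < 1) (k : ℕ) :
    HasSum (fun n : ℕ => ascPochhammerDivFactorial a (n + 1) * ((n + 1)! * k ! / (n + k + 2)!))
      ((1 - a + k)⁻¹ - ((k : ℝ) + 1)⁻¹) := by
  have hak : 0 < 1 - a + k := by positivity
  set b : ℕ → ℝ := fun n =>
    ascPochhammerDivFactorial a (n + 1) * ((n + 1)! * k ! / (n + k + 1)!) / (1 - a + k) with hb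
  have hdiff : ∀ n, b n - b (n + 1) =
      ascPochhammerDivFactorial a (n + 1) * ((n + 1)! * k ! / (n + k + 2)!) := by
    intro n
    simp only [hb, show n + 1 + k + 1 = n + k + 1 + 1 by ring,
      show n + k + 2 = n + k + 1 + 1 by ring]
    rw [ascPochhammerDivFactorial_succ a (n + 1), Nat.factorial_succ (n + k + 1),
      Nat.factorial_succ (n + 1)]
    push_cast
    field_simp
    ring
  have hanti : Antitone b := antitone_nat_of_succ_le fun n => by
    have := hdiff n
    have := ascPochhammerDivFactorial_nonneg ha0 (n + 1)
    have : 0 ≤ ascPochhammerDivFactorial a (n + 1) * ((n + 1)! * k ! / (n + k + 2)!) := by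
      positivity
    linarith
  have hlim : Tendsto b atTop (𝓝 0) := by
    have hP := ((tendsto_ascPochhammerDivFactorial ha1).comp (tendsto_add_atTop_nat 1)).div_const
      (1 - a + k)
    rw [zero_div] at hP
    refine squeeze_zero (fun n => ?_) (fun n => ?_) hP
    · have := ascPochhammerDivFactorial_nonneg ha0 (n + 1)
      positivity
    · refine div_le_div_of_nonneg_right (mul_le_of_le_one_right
        (ascPochhammerDivFactorial_nonneg ha0 _) ?_) hak.le
      rw [div_le_one (by positivity), show n + k + 1 = n + 1 + k by ring]
      exact factorial_mul_factorial_le_factorial_add _ _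
  have h0 : b 0 = (1 - a + k)⁻¹ - ((k : ℝ) + 1)⁻¹ := by
    simp only [hb, zero_add, ascPochhammerDivFactorial_succ, ascPochhammerDivFactorial_zero,
      Nat.factorial_succ k]
    push_cast
    field_simp
    ring
  simpa only [hdiff, h0, sub_zero] using hasSum_sub_succ_of_antitone hanti hlim

theorem differentiableAt_Gamma_of_pos {x : ℝ} (hx : 0 < x) : DifferentiableAt ℝ Gamma x :=
  differentiableAt_Gamma fun m => by linarith [m.cast_nonneg (α := ℝ)]

theorem differentiableAt_log_Gamma {x : ℝ} (hx : 0 < x) : DifferentiableAt ℝ (log ∘ Gamma) x :=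
  (differentiableAt_Gamma_of_pos hx).log (Gamma_pos_of_pos hx).ne'

theorem deriv_log_Gamma {x : ℝ} (hx : 0 < x) :
    deriv (log ∘ Gamma) x = deriv Gamma x / Gamma x :=
  deriv_log_comp_eq_logDeriv (differentiableAt_Gamma_of_pos hx) (Gamma_pos_of_pos hx).ne'

theorem deriv_log_Gamma_add_one {x : ℝ} (hx : 0 < x) :
    deriv (log ∘ Gamma) (x + 1) = deriv (log ∘ Gamma) x + x⁻¹ := by
  rw [← deriv_comp_add_const, ← deriv_log,
    ← deriv_add (differentiableAt_log_Gamma hx) (differentiableAt_log hx.ne')]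
  refine Filter.EventuallyEq.deriv_eq ?_
  filter_upwards [eventually_gt_nhds hx] with y hy
  simp only [Pi.add_apply, Function.comp_apply, Gamma_add_one hy.ne',
    log_mul hy.ne' (Gamma_pos_of_pos hy).ne', add_comm]

theorem deriv_log_Gamma_add_nat {x : ℝ} (hx : 0 < x) (n : ℕ) :
    deriv (log ∘ Gamma) (x + n) = deriv (log ∘ Gamma) x + ∑ k ∈ range n, (x + k)⁻¹ := by
  induction n with
  | zero => simp
  | succ n ih =>
    rw [Nat.cast_succ, ← add_assoc, deriv_log_Gamma_add_one (by positivity), ih, sum_range_succ,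
      add_assoc]

theorem deriv_log_Gamma_nat_add_one (n : ℕ) :
    deriv (log ∘ Gamma) (n + 1) = -eulerMascheroniConstant + harmonic n := by
  rw [deriv_log_Gamma (by positivity), deriv_Gamma_nat, Gamma_nat_eq_factorial]
  field_simp

theorem monotoneOn_deriv_log_Gamma : MonotoneOn (deriv (log ∘ Gamma)) (Set.Ioi 0) :=
  convexOn_log_Gamma.monotoneOn_deriv fun _ hx => differentiableAt_log_Gamma hx

theorem tendsto_deriv_log_Gamma_add_nat_sub_harmonic {x : ℝ} (hx : 0 < x) (hx1 : x ≤ 1) :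
    Tendsto (fun n : ℕ => deriv (log ∘ Gamma) (x + n) - harmonic n) atTop
      (𝓝 (-eulerMascheroniConstant)) := by
  rw [← tendsto_add_atTop_iff_nat 1]
  have hlower : Tendsto (fun n : ℕ => -eulerMascheroniConstant - 1 / ((n : ℝ) + 1)) atTop
      (𝓝 (-eulerMascheroniConstant)) := by
    simpa using tendsto_one_div_add_atTop_nhds_zero_nat.const_sub (-eulerMascheroniConstant)
  refine tendsto_of_tendsto_of_tendsto_of_le_of_le hlower tendsto_const_nhds (fun n => ?_)
    (fun n => ?_)
  · have h := monotoneOn_deriv_log_Gamma (a := (n : ℝ) + 1) (b := x + (n + 1 : ℕ))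
      (by simp; positivity) (by simp; positivity) (by push_cast; linarith)
    rw [deriv_log_Gamma_nat_add_one] at h
    rw [harmonic_succ, one_div]
    push_cast at h ⊢
    linarith
  · have h := monotoneOn_deriv_log_Gamma (a := x + (n + 1 : ℕ)) (b := ((n + 1 : ℕ) : ℝ) + 1)
      (by simp; positivity) (by simp; positivity) (by push_cast; linarith)
    rw [deriv_log_Gamma_nat_add_one] at h
    linarith

theorem hasSum_inv_add_sub_inv_succ {x : ℝ} (hx : 0 < x) (hx1 : x ≤ 1) :
    HasSum (fun k : ℕ => (x + k)⁻¹ - ((k : ℝ) + 1)⁻¹)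
      (-eulerMascheroniConstant - deriv (log ∘ Gamma) x) := by
  rw [hasSum_iff_tendsto_nat_of_nonneg
    (fun k => sub_nonneg.2 (inv_anti₀ (by positivity) (by linarith)))]
  have hpartial : ∀ n : ℕ, ∑ k ∈ range n, ((x + k)⁻¹ - ((k : ℝ) + 1)⁻¹) =
      (deriv (log ∘ Gamma) (x + n) - harmonic n) - deriv (log ∘ Gamma) x := by
    intro n
    rw [sum_sub_distrib, deriv_log_Gamma_add_nat hx, harmonic]
    push_cast
    ring
  simpa only [hpartial] using
    (tendsto_deriv_log_Gamma_add_nat_sub_harmonic hx hx1).sub_const (deriv (log ∘ Gamma) x)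

theorem hasSum_ascPochhammerDivFactorial_one_sub_of_le_one {x : ℝ} (hx : 0 < x) (hx1 : x ≤ 1) :
    HasSum (fun n : ℕ => ascPochhammerDivFactorial (1 - x) (n + 1) / (n + 1))
      (-eulerMascheroniConstant - deriv (log ∘ Gamma) x) := by
  refine HasSum.of_rows_of_nonneg
    (F := fun k n => ascPochhammerDivFactorial (1 - x) (n + 1) * ((n + 1)! * k ! / (n + k + 2)!))
    (fun k n => ?_) (fun k => ?_) (fun n => ?_) (hasSum_inv_add_sub_inv_succ hx hx1)
  · have := ascPochhammerDivFactorial_nonneg (sub_nonneg.2 hx1) (n + 1)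
    positivity
  · simpa only [sub_sub_cancel] using
      hasSum_ascPochhammerDivFactorial_mul_factorial_div_factorial (sub_nonneg.2 hx1)
        (by linarith) k
  · simpa only [mul_one_div] using
      (hasSum_factorial_mul_factorial_div_factorial n).mul_left
        (ascPochhammerDivFactorial (1 - x) (n + 1))

theorem HasSum.ascPochhammerDivFactorial_one_sub_add_one {x : ℝ} (hx : 0 < x)
    (h : HasSum (fun n : ℕ => ascPochhammerDivFactorial (1 - x) (n + 1) / (n + 1))
      (-eulerMascheroniConstant - deriv (log ∘ Gamma) x)) :
    HasSum (fun n : ℕ => ascPochhammerDivFactorial (1 - (x + 1)) (n + 1) / (n + 1))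
      (-eulerMascheroniConstant - deriv (log ∘ Gamma) (x + 1)) := by
  have hWaring := hasSum_ascPochhammerDivFactorial_div_succ (a := 1 - x) (by linarith)
  rw [sub_sub_cancel] at hWaring
  have hterm : (fun n : ℕ => ascPochhammerDivFactorial (1 - (x + 1)) (n + 1) / (n + 1)) =
      fun n : ℕ => ascPochhammerDivFactorial (1 - x) (n + 1) / (n + 1) -
        ascPochhammerDivFactorial (1 - x) n / (n + 1) := by
    ext n
    rw [show 1 - (x + 1) = 1 - x - 1 by ring, ascPochhammerDivFactorial_sub_one_succ, sub_div]
  rw [hterm, deriv_log_Gamma_add_one hx, sub_add_eq_sub_sub]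
  exact h.sub hWaring

theorem hasSum_ascPochhammerDivFactorial_one_sub_of_le_nat_add_one (N : ℕ) {x : ℝ} (hx : 0 < x)
    (hxN : x ≤ N + 1) :
    HasSum (fun n : ℕ => ascPochhammerDivFactorial (1 - x) (n + 1) / (n + 1))
      (-eulerMascheroniConstant - deriv (log ∘ Gamma) x) := by
  induction N generalizing x with
  | zero => exact hasSum_ascPochhammerDivFactorial_one_sub_of_le_one hx (by simpa using hxN)
  | succ N ih =>
    rcases le_or_gt x 1 with hx1 | hx1
    · exact hasSum_ascPochhammerDivFactorial_one_sub_of_le_one hx hx1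
    · have h := (ih (x := x - 1) (by linarith) (by push_cast at hxN; linarith))
      simpa only [sub_add_cancel] using h.ascPochhammerDivFactorial_one_sub_add_one (by linarith)

theorem real_digamma_hasSum_pochhammer (x : ℝ) (hx : 0 < x) :
    HasSum
      (fun n : ℕ =>
        Polynomial.eval (1 - x) (ascPochhammer ℝ (n + 1)) /
          (((n : ℝ) + 1) * ((n + 1).factorial : ℝ)))
      (-Real.eulerMascheroniConstant - deriv Real.Gamma x / Real.Gamma x) := by
  rw [← deriv_log_Gamma hx]
  convert hasSum_ascPochhammerDivFactorial_one_sub_of_le_nat_add_one ⌈x⌉₊ hx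
    (by linarith [Nat.le_ceil x]) using 2 with n
  rw [ascPochhammerDivFactorial, div_div, mul_comm]
end
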